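/- arXiv:math/0202268 — 2 statements merged into one kernel-verified Lean document; each statement's English description precedes it below -/
import Mathlib

section
/- Let y : ℤ → ℤ be finitely supported with φ(y) > 0, n_f = min{n : ∑_{k≤n} y(k) = φ(y)}, and define (modified-rule) f̃(y)(k) = y(k) − [k = n_f] − [k = n_f + 1] (subtracting 1 at positions n_f and n_f+1, corresponding to A_i(n_f)^{-1} with A_i(n) = Y_i(n)Y_i(n+1)·⋯ in the variant crystal M_c). Then φ(f̃(y)) = φ(y) − 1 and ε(f̃(y)) = ε(y) + 1, where ε(y) = max{−∑_{k>n} y(k)}. -/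
open Finset

/-- Partial sum `∑_{k ≤ n} y k` of a finitely supported `y : ℤ → ℤ`. -/
def psum (y : ℤ →₀ ℤ) (n : ℤ) : ℤ := ∑ k ∈ y.support.filter (fun k => k ≤ n), y k

/-- Tail sum `∑_{k > n} y k`. -/
def tgt (y : ℤ →₀ ℤ) (n : ℤ) : ℤ := ∑ k ∈ y.support.filter (fun k => n < k), y k

/-- Tail sum `∑_{k ≥ n} y k`. -/
def tge (y : ℤ →₀ ℤ) (n : ℤ) : ℤ := ∑ k ∈ y.support.filter (fun k => n ≤ k), y k

/-- Total weight `∑_n y n`. -/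
def wt (y : ℤ →₀ ℤ) : ℤ := ∑ k ∈ y.support, y k

/-- `φ(y) = max {∑_{k ≤ n} y k : n ∈ ℤ}` (the set is finite and nonempty). -/
noncomputable def phi (y : ℤ →₀ ℤ) : ℤ := sSup (Set.range (psum y))

/-- `ε(y) = max {−∑_{k > n} y k : n ∈ ℤ}` (the set is finite and nonempty). -/
noncomputable def eps (y : ℤ →₀ ℤ) : ℤ := sSup (Set.range (fun n => - tgt y n))

/-- `n_f = min {n : ∑_{k ≤ n} y k = φ(y)}`. -/
noncomputable def nfPos (y : ℤ →₀ ℤ) : ℤ := sInf {n | psum y n = phi y}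

/-- `n_e = max {n : ∑_{k ≤ n} y k = φ(y)}` (variant monomial crystal convention). -/
noncomputable def nePos (y : ℤ →₀ ℤ) : ℤ := sSup {n | psum y n = phi y}

/-- Variant monomial operator `f̃`: subtract 1 at positions `n_f` and `n_f + 1`. -/
noncomputable def ftil (y : ℤ →₀ ℤ) : ℤ →₀ ℤ :=
  y - Finsupp.single (nfPos y) 1 - Finsupp.single (nfPos y + 1) 1

/-- Variant monomial operator `ẽ`: add 1 at positions `n_e` and `n_e + 1`. -/
noncomputable def etil (y : ℤ →₀ ℤ) : ℤ →₀ ℤ :=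
  y + Finsupp.single (nePos y) 1 + Finsupp.single (nePos y + 1) 1

lemma psum_eq_sum (y : ℤ →₀ ℤ) (S : Finset ℤ) (hS : y.support ⊆ S) (n : ℤ) :
    psum y n = ∑ k ∈ S.filter (fun k => k ≤ n), y k := by
  refine Finset.sum_subset (Finset.filter_subset_filter _ hS) ?_
  intro x hx hnx
  by_contra h
  exact hnx (Finset.mem_filter.mpr ⟨Finsupp.mem_support_iff.mpr h, (Finset.mem_filter.mp hx).2⟩)

lemma wt_eq_sum (y : ℤ →₀ ℤ) (S : Finset ℤ) (hS : y.support ⊆ S) :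
    wt y = ∑ k ∈ S, y k := by
  refine Finset.sum_subset hS ?_
  intro x _ hx
  simpa using (Finsupp.notMem_support_iff.mp hx)

lemma psum_sub (a b : ℤ →₀ ℤ) (n : ℤ) : psum (a - b) n = psum a n - psum b n := by
  classical
  set S := a.support ∪ b.support ∪ (a - b).support with hSdef
  rw [psum_eq_sum (a-b) S Finset.subset_union_right,
    psum_eq_sum a S (Finset.subset_union_left.trans Finset.subset_union_left),
    psum_eq_sum b S (Finset.subset_union_right.trans Finset.subset_union_left),
    ← Finset.sum_sub_distrib]
  simp [Finsupp.sub_apply]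

lemma wt_sub (a b : ℤ →₀ ℤ) : wt (a - b) = wt a - wt b := by
  classical
  set S := a.support ∪ b.support ∪ (a - b).support with hSdef
  rw [wt_eq_sum (a-b) S Finset.subset_union_right,
    wt_eq_sum a S (Finset.subset_union_left.trans Finset.subset_union_left),
    wt_eq_sum b S (Finset.subset_union_right.trans Finset.subset_union_left),
    ← Finset.sum_sub_distrib]
  simp [Finsupp.sub_apply]

lemma psum_single (a n : ℤ) : psum (Finsupp.single a (1:ℤ)) n = if a ≤ n then 1 else 0 := by
  rw [psum, Finsupp.support_single_ne_zero _ one_ne_zero, Finset.filter_singleton]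
  split <;> simp [Finsupp.single_apply]

lemma wt_single (a : ℤ) : wt (Finsupp.single a (1:ℤ)) = 1 := by
  rw [wt, Finsupp.support_single_ne_zero _ one_ne_zero]
  simp

lemma psum_add_tgt (y : ℤ →₀ ℤ) (n : ℤ) : psum y n + tgt y n = wt y := by
  have h : y.support.filter (fun k => n < k) = y.support.filter (fun k => ¬ k ≤ n) := by
    ext k; simp [not_le]
  rw [psum, tgt, wt, h, Finset.sum_filter_add_sum_filter_not]

lemma bddAbove_psum (y : ℤ →₀ ℤ) : BddAbove (Set.range (psum y)) := by
  have hfin : (↑(y.support.powerset.image fun T => ∑ k ∈ T, y k) : Set ℤ).Finite :=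
    Finset.finite_toSet _
  refine hfin.bddAbove.mono ?_
  rintro _ ⟨n, rfl⟩
  simp only [Finset.coe_image, Set.mem_image, Finset.mem_coe, Finset.mem_powerset]
  exact ⟨_, Finset.filter_subset _ _, rfl⟩

lemma psum_le_phi (y : ℤ →₀ ℤ) (n : ℤ) : psum y n ≤ sSup (Set.range (psum y)) :=
  le_csSup (bddAbove_psum y) ⟨n, rfl⟩

lemma eps_eq (y : ℤ →₀ ℤ) : eps y = phi y - wt y := by
  have hb := bddAbove_psum y
  have hphi : sSup (Set.range (psum y)) = phi y := rfl
  have key : ∀ n, -tgt y n = psum y n - wt y := fun n => by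
    have := psum_add_tgt y n; linarith
  refine le_antisymm (csSup_le (Set.range_nonempty _) ?_) ?_
  · rintro _ ⟨n, rfl⟩
    have h2 := psum_le_phi y n
    dsimp only; rw [key n]; linarith [hphi ▸ h2]
  · obtain ⟨n, hn⟩ := Int.csSup_mem (Set.range_nonempty (psum y)) hb
    have hval : phi y - wt y = -tgt y n := by rw [key n, hn.trans hphi]
    rw [hval]
    refine le_csSup ⟨phi y - wt y, ?_⟩ ⟨n, rfl⟩
    rintro _ ⟨m, rfl⟩
    have h2 := psum_le_phi y m
    dsimp only; rw [key m]; linarith [hphi ▸ h2]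

/-- In the variant monomial crystal (single index), applying `f̃` decreases `φ` by 1
and increases `ε` by 1. -/
theorem stmt7 (y : ℤ →₀ ℤ) (hpos : 0 < phi y) :
    phi (ftil y) = phi y - 1 ∧ eps (ftil y) = eps y + 1 := by
  classical
  have hb := bddAbove_psum y
  have hphi : sSup (Set.range (psum y)) = phi y := rfl
  have hple : ∀ n, psum y n ≤ phi y := fun n => hphi ▸ psum_le_phi y n
  have hTne : {n | psum y n = phi y}.Nonempty := by
    obtain ⟨n, hn⟩ := Int.csSup_mem (Set.range_nonempty (psum y)) hb
    exact ⟨n, hphi ▸ hn⟩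
  have hsupp : y.support.Nonempty := by
    by_contra h
    rw [Finset.not_nonempty_iff_eq_empty] at h
    obtain ⟨n, hn⟩ := hTne
    have h0 : psum y n = 0 := by rw [psum, h]; simp
    rw [Set.mem_setOf_eq, h0] at hn; omega
  have hTbdd : BddBelow {n | psum y n = phi y} := by
    refine ⟨y.support.min' hsupp, fun n hn => ?_⟩
    by_contra h
    push_neg at h
    have hemp : y.support.filter (fun k => k ≤ n) = ∅ := by
      refine Finset.filter_false_of_mem fun x hx => ?_
      have := y.support.min'_le x hx; omega
    have h0 : psum y n = 0 := by rw [psum, hemp]; simp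
    rw [Set.mem_setOf_eq, h0] at hn; omega
  have hnf : psum y (nfPos y) = phi y := (Int.csInf_mem hTne hTbdd : psum y (nfPos y) = phi y)
  have hlt : ∀ n < nfPos y, psum y n ≤ phi y - 1 := by
    intro n hn
    have hne' : psum y n ≠ phi y := by
      intro h
      have h3 : nfPos y ≤ n := csInf_le hTbdd h
      omega
    have := hple n; omega
  have hps : ∀ n, psum (ftil y) n
      = psum y n - (if nfPos y ≤ n then 1 else 0) - (if nfPos y + 1 ≤ n then 1 else 0) := by
    intro n
    rw [ftil, psum_sub, psum_sub, psum_single, psum_single]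
  have hub : ∀ n, psum (ftil y) n ≤ phi y - 1 := by
    intro n
    rw [hps]
    rcases lt_or_ge n (nfPos y) with h | h
    · have := hlt n h; split_ifs <;> omega
    · have := hple n; rw [if_pos h]; split_ifs <;> omega
  have hval : psum (ftil y) (nfPos y) = phi y - 1 := by
    rw [hps, if_pos le_rfl, if_neg (by omega)]; omega
  have h1 : phi (ftil y) = phi y - 1 := by
    refine le_antisymm (csSup_le (Set.range_nonempty _) ?_)
      (le_csSup ⟨phi y - 1, ?_⟩ ⟨nfPos y, hval⟩)
    · rintro _ ⟨n, rfl⟩; exact hub n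
    · rintro _ ⟨n, rfl⟩; exact hub n
  have hwt : wt (ftil y) = wt y - 2 := by
    rw [ftil, wt_sub, wt_sub, wt_single, wt_single]; ring
  refine ⟨h1, ?_⟩
  have e1 := eps_eq y
  have e2 := eps_eq (ftil y)
  rw [e1, e2, h1, hwt]; ring
end

section
/- Let I = {1, 2} with a Cartan matrix (a_{ij}), and suppose ℓ_1, ℓ_2 : ℤα_1 ⊕ ℤα_2 → ℤ satisfy ℓ_1(α_1) = ℓ_2(α_2) = −1, ℓ_2(α_1) = −a_{21} and ℓ_1(α_2) = 0. Then the map v(m α_1 + n α_2) ↦ b_1(m) ⊗ b_2(n) is an isomorphism of {1,2}-crystals B_ℓ ≅ B_1 ⊗ B_2, i.e., it is a weight-preserving bijection commuting with ẽ_1, ẽ_2, f̃_1, f̃_2 and preserving ε_i and φ_i for i = 1, 2. -/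
/-- `ε_i` of the elementary crystal element `b_j(n)`: `−n` if `i = j`, `−∞` otherwise. -/
def epsB (i j : Fin 2) (n : ℤ) : WithBot ℤ := if i = j then ((-n : ℤ) : WithBot ℤ) else ⊥

/-- `φ_i` of `b_j(n)`: `n` if `i = j`, `−∞` otherwise. -/
def phiB (i j : Fin 2) (n : ℤ) : WithBot ℤ := if i = j then ((n : ℤ) : WithBot ℤ) else ⊥

/-- `ẽ_i` on `B_j`: `b_j(n) ↦ b_j(n+1)` if `i = j`, `0` otherwise. -/
def eB (i j : Fin 2) (n : ℤ) : Option ℤ := if i = j then some (n + 1) else none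

/-- `f̃_i` on `B_j`: `b_j(n) ↦ b_j(n−1)` if `i = j`, `0` otherwise. -/
def fB (i j : Fin 2) (n : ℤ) : Option ℤ := if i = j then some (n - 1) else none

/-- `ε_i` on `B_1 ⊗ B_2` (element `(m, n) = b_1(m) ⊗ b_2(n)`), by the tensor rule
`ε_i(b ⊗ b') = max (ε_i b) (ε_i b' − ⟨h_i, wt b⟩)`; here `⟨h_i, wt b_1(m)⟩ = m * a i 0`. -/
def epsT (a : Matrix (Fin 2) (Fin 2) ℤ) (i : Fin 2) (p : ℤ × ℤ) : WithBot ℤ :=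
  max (epsB i 0 p.1) (epsB i 1 p.2 + ((-(p.1 * a i 0) : ℤ) : WithBot ℤ))

/-- `φ_i` on `B_1 ⊗ B_2`, by `φ_i(b ⊗ b') = max (φ_i b') (φ_i b + ⟨h_i, wt b'⟩)`. -/
def phiT (a : Matrix (Fin 2) (Fin 2) ℤ) (i : Fin 2) (p : ℤ × ℤ) : WithBot ℤ :=
  max (phiB i 1 p.2) (phiB i 0 p.1 + ((p.2 * a i 1 : ℤ) : WithBot ℤ))

/-- `ẽ_i` on `B_1 ⊗ B_2`: `ẽ_i(b ⊗ b') = ẽ_i b ⊗ b'` if `φ_i(b) ≥ ε_i(b')`,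
`b ⊗ ẽ_i b'` otherwise (`none` is the crystal zero). -/
noncomputable def eT (i : Fin 2) (p : ℤ × ℤ) : Option (ℤ × ℤ) :=
  if epsB i 1 p.2 ≤ phiB i 0 p.1 then (eB i 0 p.1).map (fun m => (m, p.2))
  else (eB i 1 p.2).map (fun n => (p.1, n))

/-- `f̃_i` on `B_1 ⊗ B_2`: `f̃_i(b ⊗ b') = f̃_i b ⊗ b'` if `φ_i(b) > ε_i(b')`,
`b ⊗ f̃_i b'` otherwise. -/
noncomputable def fT (i : Fin 2) (p : ℤ × ℤ) : Option (ℤ × ℤ) :=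
  if epsB i 1 p.2 < phiB i 0 p.1 then (fB i 0 p.1).map (fun m => (m, p.2))
  else (fB i 1 p.2).map (fun n => (p.1, n))

/-- The map `v(m α₁ + n α₂) ↦ b_1(m) ⊗ b_2(n)` is an isomorphism of `{1,2}`-crystals
`B_𝔩 ≅ B_1 ⊗ B_2` when `ℓ₁(α₁) = ℓ₂(α₂) = −1`, `ℓ₂(α₁) = −a₂₁`, `ℓ₁(α₂) = 0`: it is a
weight-preserving bijection that preserves `ε_i`, `φ_i` and commutes with
`ẽ_i` and `f̃_i` (on `B_𝔩` one has `ẽ_i v(x) = v(x + α_i)`, `f̃_i v(x) = v(x − α_i)`,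
and these are never the crystal zero). -/
theorem stmt19 (a : Matrix (Fin 2) (Fin 2) ℤ) (h00 : a 0 0 = 2) (h11 : a 1 1 = 2)
    (l : Fin 2 → ((Fin 2 →₀ ℤ) →+ ℤ)) (α : Fin 2 → (Fin 2 →₀ ℤ))
    (hα : ∀ i, α i = Finsupp.single i 1)
    (hl00 : l 0 (α 0) = -1) (hl11 : l 1 (α 1) = -1)
    (hl01 : l 0 (α 1) = 0) (hl10 : l 1 (α 0) = - a 1 0) :
    -- the underlying map `(m,n) ↦ m α₁ + n α₂` (inverse direction of the isomorphism)
    let g : ℤ × ℤ → (Fin 2 →₀ ℤ) := fun p => p.1 • α 0 + p.2 • α 1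
    -- pairing `⟨h_i, m α₁ + n α₂⟩`
    let pair : Fin 2 → ℤ × ℤ → ℤ := fun i p => p.1 * a i 0 + p.2 * a i 1
    -- it is a bijection
    Function.Bijective g ∧
    -- it preserves weights: `wt(b_1(m) ⊗ b_2(n)) = m α₁ + n α₂ = wt (v (g (m,n)))`
    (∀ p : ℤ × ℤ, g p = p.1 • α 0 + p.2 • α 1) ∧
    -- it preserves `ε_i` and `φ_i`
    (∀ i p, epsT a i p = ((l i (g p) : ℤ) : WithBot ℤ)) ∧
    (∀ i p, phiT a i p = ((pair i p + l i (g p) : ℤ) : WithBot ℤ)) ∧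
    -- it commutes with `ẽ_i` and `f̃_i`
    (∀ i p, (eT i p).map g = some (g p + α i)) ∧
    (∀ i p, (fT i p).map g = some (g p - α i)) := by
  intro g pair
  have hg : ∀ p : ℤ × ℤ, g p = p.1 • α 0 + p.2 • α 1 := fun p => rfl
  have hlg : ∀ (i : Fin 2) (p : ℤ × ℤ),
      l i (g p) = p.1 * l i (α 0) + p.2 * l i (α 1) := by
    intro i p
    simp [hg, map_add, map_zsmul, smul_eq_mul]
  have hgadd : ∀ (p : ℤ × ℤ) (k m : ℤ), g (p.1 + k, p.2 + m) = g p + k • α 0 + m • α 1 := by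
    intro p k m
    simp only [hg]
    module
  refine ⟨?_, hg, ?_, ?_, ?_, ?_⟩
  · constructor
    · intro p q hpq
      have h0 := congrFun (congrArg (DFunLike.coe) hpq) 0
      have h1 := congrFun (congrArg (DFunLike.coe) hpq) 1
      simp only [hg, hα, Finsupp.add_apply, Finsupp.smul_apply, Finsupp.single_apply] at h0 h1
      norm_num at h0 h1
      exact Prod.ext h0 h1
    · intro q
      refine ⟨(q 0, q 1), ?_⟩
      simp only [hg, hα]
      ext j
      fin_cases j <;>
        simp [Finsupp.single_apply, Fin.ext_iff]
  · intro i p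
    obtain rfl | rfl : i = 0 ∨ i = 1 := by omega
    · show max (epsB 0 0 p.1) (epsB 0 1 p.2 + _) = _
      rw [hlg, hl00, hl01]
      simp only [epsB, if_pos rfl, if_neg (by decide : ¬(0:Fin 2) = 1), WithBot.bot_add, if_true,
        max_eq_left bot_le, WithBot.coe_eq_coe]
      ring
    · show max (epsB 1 0 p.1) (epsB 1 1 p.2 + _) = _
      rw [hlg, hl11, hl10]
      simp only [epsB, if_true, if_pos rfl, if_neg (by decide : ¬(1:Fin 2) = 0),
        ← WithBot.coe_add, max_eq_right bot_le, WithBot.coe_eq_coe]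
      ring
  · intro i p
    obtain rfl | rfl : i = 0 ∨ i = 1 := by omega
    · show max (phiB 0 1 p.2) (phiB 0 0 p.1 + _) = _
      rw [hlg, hl00, hl01]
      simp only [phiB, pair, if_true, if_pos rfl, if_neg (by decide : ¬(0:Fin 2) = 1),
        ← WithBot.coe_add, max_eq_right bot_le, WithBot.coe_eq_coe, h00]
      ring
    · show max (phiB 1 1 p.2) (phiB 1 0 p.1 + _) = _
      rw [hlg, hl11, hl10]
      simp only [phiB, pair, if_pos rfl, if_neg (by decide : ¬(1:Fin 2) = 0), WithBot.bot_add, if_true,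
        max_eq_left bot_le, WithBot.coe_eq_coe, h11]
      ring
  · intro i p
    obtain rfl | rfl : i = 0 ∨ i = 1 := by omega
    · have hc : epsB 0 1 p.2 ≤ phiB 0 0 p.1 := by simp [epsB, phiB]
      rw [eT, if_pos hc]
      have := hgadd p 1 0
      simp only [add_zero, zero_smul, one_smul] at this
      simp [eB, this]
    · have hc : ¬ epsB 1 1 p.2 ≤ phiB 1 0 p.1 := by simp [epsB, phiB]
      rw [eT, if_neg hc]
      have := hgadd p 0 1
      simp only [add_zero, zero_smul, one_smul, zero_add, add_assoc] at this
      simp [eB, this, add_assoc]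
  · intro i p
    obtain rfl | rfl : i = 0 ∨ i = 1 := by omega
    · have hc : epsB 0 1 p.2 < phiB 0 0 p.1 := by simp [epsB, phiB]
      rw [fT, if_pos hc]
      have h2 : g (p.1 - 1, p.2) = g p - α 0 := by
        simp only [hg]
        module
      simp [fB, h2]
    · have hc : ¬ epsB 1 1 p.2 < phiB 1 0 p.1 := by simp [epsB, phiB]
      rw [fT, if_neg hc]
      have h2 : g (p.1, p.2 - 1) = g p - α 1 := by
        simp only [hg]
        module
      simp [fB, h2]
end
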